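/- arXiv:2509.06912 — 4 statements merged into one kernel-verified Lean document; each statement's English description precedes it below -/
import Mathlib

section
/- Let b2 > q ≥ 1 be integers and let k = T − b1 ≥ q for some integers T > b1 ≥ 1. Define q×b2 matrices over F_2: P'_{b2} = (I_q | 0) and, for i ∈ [1, b2−1], P'_i has a single 1 in row ((i−1) mod q)+1 and column q + ((i−1) mod (b2−q)) + 1, zeros elsewhere. Then the b2·q × b2·q block matrix M with (r,c)-block equal to P'_{b2 − r + c} for r, c ∈ [1, q] (where P'_j = 0 if j ∉ [1, b2]) — i.e., the truncated matrix P'_0 of the paper — is invertible over F_2. -/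
/-!
A kernel vector of `P'₀` vanishes, in two rounds. Call a column `(e, c)` of the first kind if
`e ≥ q`: there the blocks `P'_i`, `i < b2`, put their single 1. For such a column pick the shift
`t < b2 - q` with `t + c ≡ e - q (mod b2 - q)`; in row block `r = b2 - 1 - t ≥ q` every block is
some `P'_i` with `i < b2`, and the row `d = (t + c) mod q` has its only 1 in column `(e, c)`,
because `t + c' ≡ t + c (mod q)` forces `c' = c`. For a column `(e, c)` with `e < q`, row `(c, e)`
meets the identity block `P'_{b2}` in `(e, c)` and is otherwise supported on columns of the
first kind.
-/

/-- Top `q` rows of the RD parity matrices `P'_i` (items (II)-(III) of the RD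
construction): `P'_{b2} = (I_q | 0)`; for `i ∈ [1, b2-1]`, `P'_i` has a single
1 in row `((i-1) mod q) + 1` and column `q + ((i-1) mod (b2-q)) + 1`;
`P'_i = 0` otherwise. (Indices below are 0-based.) -/
def rdBlock (b2 q i : ℕ) : Matrix (Fin q) (Fin b2) (ZMod 2) :=
  if i = b2 then
    fun d e => if (e : ℕ) = (d : ℕ) then 1 else 0
  else if 1 ≤ i ∧ i ≤ b2 - 1 then
    fun d e => if (d : ℕ) = (i - 1) % q ∧ (e : ℕ) = q + (i - 1) % (b2 - q) then 1 else 0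
  else 0

/-- The truncated matrix `P'₀`: the `b2*q × b2*q` block matrix whose
(r,c)-block is `P'_{b2 - r + c}` (with `P'_j = 0` for `j ∉ [1, b2]`),
where row blocks are indexed by `r ∈ [1, b2]` (with `q` rows each) and column
blocks by `c ∈ [1, q]` (with `b2` columns each). A row is encoded as a pair
`(r, d)` and a column as a pair `(e, c)`, where `d`, `e` are the 0-based
positions inside the blocks. -/
def rdTruncated (b2 q : ℕ) :
    Matrix (Fin b2 × Fin q) (Fin b2 × Fin q) (ZMod 2) :=
  fun rd ec => rdBlock b2 q (b2 - (rd.1 : ℕ) - 1 + (ec.2 : ℕ) + 1) rd.2 ec.1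

namespace Matrix

variable {m n R : Type*} [Fintype n]

theorem eq_zero_of_mulVec_eq_zero_of_exists_pivot [Semiring R] [NoZeroDivisors R]
    (A : Matrix m n R) (level : n → ℕ)
    (hpivot : ∀ x, ∃ i, A i x ≠ 0 ∧ ∀ y ≠ x, A i y ≠ 0 → level y < level x)
    {v : n → R} (hv : A *ᵥ v = 0) : v = 0 := by
  suffices h : ∀ k x, level x = k → v x = 0 from funext fun x => h _ x rfl
  intro k
  induction k using Nat.strong_induction_on with
  | _ k ih =>
    intro x hx
    obtain ⟨i, hix, hlower⟩ := hpivot x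
    have hrow : A i x * v x = (A *ᵥ v) i := by
      refine (Fintype.sum_eq_single (f := fun y => A i y * v y) x fun y hyx => ?_).symm
      by_cases hy : A i y = 0
      · rw [hy, zero_mul]
      · rw [ih _ (hx ▸ hlower y hyx hy) y rfl, mul_zero]
    rw [hv] at hrow
    exact (mul_eq_zero.1 hrow).resolve_left hix

theorem isUnit_of_forall_exists_pivot [DecidableEq n] {K : Type*} [Field K] (A : Matrix n n K)
    (level : n → ℕ) (hpivot : ∀ x, ∃ i, A i x ≠ 0 ∧ ∀ y ≠ x, A i y ≠ 0 → level y < level x) :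
    IsUnit A := by
  refine mulVec_injective_iff_isUnit.1 fun v w hvw => sub_eq_zero.1 ?_
  exact A.eq_zero_of_mulVec_eq_zero_of_exists_pivot level hpivot
    (by rw [mulVec_sub, hvw, sub_self])

end Matrix

theorem Nat.exists_lt_add_mod_eq {N : ℕ} (hN : 0 < N) (c : ℕ) {m : ℕ} (hm : m < N) :
    ∃ t < N, (t + c) % N = m := by
  have : NeZero N := ⟨hN.ne'⟩
  refine ⟨((m : ZMod N) - c).val, ZMod.val_lt _, ?_⟩
  rw [← ZMod.val_natCast, Nat.cast_add, ZMod.natCast_zmod_val, sub_add_cancel,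
    ZMod.val_natCast, Nat.mod_eq_of_lt hm]

section rdTruncated

variable {b2 q : ℕ}

theorem rdTruncated_apply_of_eq (r e : Fin b2) (d c : Fin q) (h : (c : ℕ) = r) :
    rdTruncated b2 q (r, d) (e, c) = if (e : ℕ) = d then 1 else 0 := by
  have hi : b2 - (r : ℕ) - 1 + c + 1 = b2 := by omega
  simp [rdTruncated, rdBlock, hi]

theorem rdTruncated_apply_of_lt (r e : Fin b2) (d c : Fin q) (h : (c : ℕ) < r) :
    rdTruncated b2 q (r, d) (e, c) =
      if (d : ℕ) = (b2 - 1 - r + c) % q ∧ (e : ℕ) = q + (b2 - 1 - r + c) % (b2 - q)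
      then 1 else 0 := by
  have hne : b2 - (r : ℕ) - 1 + c + 1 ≠ b2 := by omega
  have hrange : 1 ≤ b2 - (r : ℕ) - 1 + c + 1 ∧ b2 - (r : ℕ) - 1 + c + 1 ≤ b2 - 1 := by omega
  have hpred : b2 - (r : ℕ) - 1 + c + 1 - 1 = b2 - 1 - r + c := by omega
  simp [rdTruncated, rdBlock, hne, hrange, hpred]

theorem rdTruncated_apply_of_gt (r e : Fin b2) (d c : Fin q) (h : (r : ℕ) < c) :
    rdTruncated b2 q (r, d) (e, c) = 0 := by
  have hne : b2 - (r : ℕ) - 1 + c + 1 ≠ b2 := by omega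
  have hrange : ¬ b2 - (r : ℕ) - 1 + c + 1 ≤ b2 - 1 := by omega
  simp [rdTruncated, rdBlock, hne, hrange]

theorem rdTruncated_exists_row_eq_single (hqb : q < b2) (e : Fin b2) (c : Fin q)
    (he : q ≤ (e : ℕ)) :
    ∃ i, rdTruncated b2 q i (e, c) ≠ 0 ∧ ∀ y, rdTruncated b2 q i y ≠ 0 → y = (e, c) := by
  obtain ⟨t, ht, hte⟩ := Nat.exists_lt_add_mod_eq (Nat.sub_pos_of_lt hqb) c
    (m := e - q) (by omega)
  let r : Fin b2 := ⟨b2 - 1 - t, by omega⟩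
  let d : Fin q := ⟨(t + c) % q, Nat.mod_lt _ c.pos⟩
  have hentry : ∀ (e' : Fin b2) (c' : Fin q), rdTruncated b2 q (r, d) (e', c') =
      if (t + c) % q = (t + c') % q ∧ (e' : ℕ) = q + (t + c') % (b2 - q) then 1 else 0 := by
    intro e' c'
    have hshift : b2 - 1 - (r : ℕ) + c' = t + c' := by simp only [r]; omega
    rw [rdTruncated_apply_of_lt r e' d c' (by simp only [r]; omega), hshift]
  refine ⟨(r, d), by simp [hentry, hte]; omega, ?_⟩
  rintro ⟨e', c'⟩ hy
  rw [hentry, ne_eq, ite_eq_right_iff, not_forall] at hy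
  obtain ⟨⟨hd, he'⟩, -⟩ := hy
  have hc : c' = c := Fin.ext <| (Nat.ModEq.add_left_cancel' t hd.symm).eq_of_lt_of_lt c'.2 c.2
  subst hc
  exact Prod.ext (Fin.ext (show (e' : ℕ) = e by omega)) rfl

theorem rdTruncated_exists_row_eq_single_or_le (hqb : q < b2) (e : Fin b2) (c : Fin q)
    (he : (e : ℕ) < q) :
    ∃ i, rdTruncated b2 q i (e, c) ≠ 0 ∧
      ∀ y, rdTruncated b2 q i y ≠ 0 → y = (e, c) ∨ q ≤ (y.1 : ℕ) := by
  let r : Fin b2 := ⟨c, c.2.trans hqb⟩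
  let d : Fin q := ⟨e, he⟩
  refine ⟨(r, d), by simp [rdTruncated_apply_of_eq r e d c rfl, d], ?_⟩
  rintro ⟨e', c'⟩ hy
  rcases lt_trichotomy (c' : ℕ) c with hlt | heq | hgt
  · rw [rdTruncated_apply_of_lt r e' d c' hlt, ne_eq, ite_eq_right_iff, not_forall] at hy
    obtain ⟨⟨-, he'⟩, -⟩ := hy
    exact Or.inr (by simp only; omega)
  · rw [rdTruncated_apply_of_eq r e' d c' heq, ne_eq, ite_eq_right_iff, not_forall] at hy
    obtain ⟨he', -⟩ := hy
    exact Or.inl (Prod.ext (Fin.ext he') (Fin.ext heq))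
  · exact absurd (rdTruncated_apply_of_gt r e' d c' hgt) hy

end rdTruncated

theorem stmt1_general (b2 q : ℕ) (hqb : q < b2) :
    IsUnit (rdTruncated b2 q) := by
  refine (rdTruncated b2 q).isUnit_of_forall_exists_pivot
    (fun y => if q ≤ (y.1 : ℕ) then 0 else 1) ?_
  rintro ⟨e, c⟩
  by_cases he : q ≤ (e : ℕ)
  · obtain ⟨i, hi, hsingle⟩ := rdTruncated_exists_row_eq_single hqb e c he
    exact ⟨i, hi, fun y hne hy => absurd (hsingle y hy) hne⟩
  · obtain ⟨i, hi, hrow⟩ := rdTruncated_exists_row_eq_single_or_le hqb e c (not_le.1 he)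
    refine ⟨i, hi, fun y hne hy => ?_⟩
    simp [he, (hrow y hy).resolve_left hne]

/-- Lemma 2 ('invertible') of the paper: the truncated matrix `P'₀` is an
invertible `b2*q × b2*q` binary matrix. -/
theorem stmt1 (b2 q : ℕ) (hq : 1 ≤ q) (hqb : q < b2) :
    IsUnit (rdTruncated b2 q) :=
  stmt1_general b2 q hqb
end

section
/- Let b1, b2, T be positive integers with b1 ≠ b2 and T − b1 − b2 ≥ (b1·b2)/|b1 − b2| (as a rational inequality). Then (T − max(b1,b2)) / min(b1,b2) ≥ ⌈(T − min(b1,b2)) / max(b1,b2)⌉, where the left side is a rational number and the right side is the ceiling of a rational number. -/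
/-!
Write `m < M` for the two burst lengths. The two quotients differ by
`(T - M) / m - (T - m) / M = (M - m) (T - m - M) / (m M)`, which the hypothesis makes at least `1`;
a gap of `1` leaves room for the ceiling, since `⌈x⌉ < x + 1`.
-/

lemma div_sub_div_swap_eq {K : Type*} [Field K] {m M T : K} (hm : m ≠ 0) (hM : M ≠ 0) :
    (T - M) / m - (T - m) / M = (M - m) * (T - m - M) / (m * M) := by
  field_simp
  ring

section

variable {K : Type*} [Field K] [LinearOrder K] [IsStrictOrderedRing K]

lemma one_le_div_sub_div {m M T : K} (hm : 0 < m) (hmM : m < M)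
    (h : m * M / (M - m) ≤ T - m - M) :
    1 ≤ (T - M) / m - (T - m) / M := by
  have hM : 0 < M := hm.trans hmM
  rw [div_sub_div_swap_eq hm.ne' hM.ne', one_le_div (mul_pos hm hM)]
  linarith [(div_le_iff₀ (sub_pos.2 hmM)).1 h]

lemma Int.ceil_le_of_add_one_le [FloorRing K] {x y : K} (h : x + 1 ≤ y) : (⌈x⌉ : K) ≤ y :=
  (Int.ceil_lt_add_one x).le.trans h

end

theorem stmt2_general (b1 b2 T : ℕ) (hb1 : 0 < b1) (hb2 : 0 < b2)
    (hne : b1 ≠ b2)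
    (h : (T : ℚ) - b1 - b2 ≥ (b1 * b2 : ℚ) / |(b1 : ℚ) - b2|) :
    ((T : ℚ) - max b1 b2) / min b1 b2 ≥ (⌈((T : ℚ) - min b1 b2) / max b1 b2⌉ : ℤ) := by
  push_cast
  set m := min (b1 : ℚ) b2
  set M := max (b1 : ℚ) b2
  have hm : 0 < m := lt_min (by exact_mod_cast hb1) (by exact_mod_cast hb2)
  have hmM : m < M := min_lt_max.2 (by exact_mod_cast hne)
  have hgap : m * M / (M - m) ≤ T - m - M := by
    rwa [min_mul_max, max_sub_min_eq_abs, abs_sub_comm, sub_sub, min_add_max, ← sub_sub]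
  exact Int.ceil_le_of_add_one_le (by linarith [one_le_div_sub_div hm hmM hgap])

/-- Remark 1 (sufficient condition): if `T - b1 - b2 ≥ b1*b2/|b1-b2|` (as rationals),
then `(T - max b1 b2)/min b1 b2 ≥ ⌈(T - min b1 b2)/max b1 b2⌉`. -/
theorem stmt2 (b1 b2 T : ℕ) (hb1 : 0 < b1) (hb2 : 0 < b2) (hT : 0 < T)
    (hne : b1 ≠ b2)
    (h : (T : ℚ) - b1 - b2 ≥ (b1 * b2 : ℚ) / |(b1 : ℚ) - b2|) :
    ((T : ℚ) - max b1 b2) / min b1 b2 ≥ (⌈((T : ℚ) - min b1 b2) / max b1 b2⌉ : ℤ) :=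
  stmt2_general b1 b2 T hb1 hb2 hne h
end

section
/- Let b1 > b2 be positive integers and T ≥ b1 + b2 with T − b2 = p'·b1 + q', 1 ≤ q' ≤ b1, and suppose (T − b1)/b2 ≥ ⌈(T − b2)/b1⌉. Then for every u ∈ [1, p'], u·b1 + q' + (p' − u + 1)·b2 ≤ T, and b1 + (p'+1)·b2 ≤ T. -/
/-!
Since `T = p'·b1 + q' + b2`, the delay of coordinate `u` falls short of `T` by `(p' - u)(b1 - b2) ≥ 0`.
For the last coordinate, `q' ≥ 1` makes `⌈(T - b2)/b1⌉ = ⌈p' + q'/b1⌉` at least `p' + 1`, so the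
hypothesis gives `(T - b1)/b2 ≥ p' + 1`, i.e. `b1 + (p' + 1)·b2 ≤ T`.
-/

theorem Nat.mul_add_add_sub_add_one_mul_le {a b p q u : ℕ} (hab : b ≤ a) (hu : u ≤ p) :
    u * a + q + (p - u + 1) * b ≤ p * a + q + b := by
  obtain ⟨k, rfl⟩ := Nat.exists_eq_add_of_le hu
  have : k * b ≤ k * a := Nat.mul_le_mul_left k hab
  rw [Nat.add_sub_cancel_left]
  nlinarith

theorem Int.add_one_le_ceil_div_of_eq_mul_add {K : Type*} [Field K] [LinearOrder K]
    [IsStrictOrderedRing K] [FloorRing K] {x b q : K} {p : ℕ} (hb : 0 < b) (hq : 0 < q)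
    (hx : x = p * b + q) : (p : ℤ) + 1 ≤ ⌈x / b⌉ := by
  rw [Int.add_one_le_iff, Int.lt_ceil, Int.cast_natCast, lt_div_iff₀ hb, hx]
  linarith

theorem Nat.add_mul_le_of_le_div {a b c n : ℕ} (hb : 0 < b)
    (h : ((n : ℚ)) ≤ ((c : ℚ) - a) / b) : a + n * b ≤ c := by
  rw [le_div_iff₀ (by exact_mod_cast hb)] at h
  exact_mod_cast (by push_cast; linarith : ((a + n * b : ℕ) : ℚ) ≤ c)

theorem stmt14_general (b1 b2 T p' q' : ℕ) (hb2 : 0 < b2) (hb : b2 < b1)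
    (hpq : T - b2 = p' * b1 + q') (hq1 : 1 ≤ q')
    (hcon : ((T : ℚ) - b1) / b2 ≥ (⌈((T : ℚ) - b2) / b1⌉ : ℤ)) :
    (∀ u, 1 ≤ u → u ≤ p' → u * b1 + q' + (p' - u + 1) * b2 ≤ T) ∧
      b1 + (p' + 1) * b2 ≤ T := by
  have hT : T = p' * b1 + q' + b2 := by omega
  refine ⟨fun u _ hu => hT ▸ Nat.mul_add_add_sub_add_one_mul_le hb.le hu, ?_⟩
  have hceil : (p' : ℤ) + 1 ≤ ⌈((T : ℚ) - b2) / b1⌉ :=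
    Int.add_one_le_ceil_div_of_eq_mul_add (by exact_mod_cast hb2.trans hb)
      (Nat.cast_pos.mpr hq1) (by rw [hT]; push_cast; ring)
  refine Nat.add_mul_le_of_le_div hb2 (le_trans ?_ hcon)
  exact_mod_cast hceil

/-- Delay-sum verification for Theorem 5 (case `b2 < b1`): with
`T - b2 = p'*b1 + q'`, `1 ≤ q' ≤ b1`, and `(T-b1)/b2 ≥ ⌈(T-b2)/b1⌉`,
every coordinate's total delay is at most `T`. -/
theorem stmt14 (b1 b2 T p' q' : ℕ) (hb2 : 0 < b2) (hb : b2 < b1)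
    (hT : b1 + b2 ≤ T) (hpq : T - b2 = p' * b1 + q') (hq1 : 1 ≤ q') (hq2 : q' ≤ b1)
    (hcon : ((T : ℚ) - b1) / b2 ≥ (⌈((T : ℚ) - b2) / b1⌉ : ℤ)) :
    (∀ u, 1 ≤ u → u ≤ p' → u * b1 + q' + (p' - u + 1) * b2 ≤ T) ∧
      b1 + (p' + 1) * b2 ≤ T :=
  stmt14_general b1 b2 T p' q' hb2 hb hpq hq1 hcon
end

section
/- Let b1, b2 be distinct positive integers. For T = b1 + b2 + ⌈(b1·b2)/|b1−b2|⌉ and all larger T, the inequality (T − max(b1,b2))·max(b1,b2) ≥ min(b1,b2)·(T − min(b1,b2) + max(b1,b2) − 1) holds; equivalently, ⌈(T − min(b1,b2))/max(b1,b2)⌉ ≤ (T − max(b1,b2))/min(b1,b2). -/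
section

variable {α : Type*} [Field α] [LinearOrder α] [IsStrictOrderedRing α]

-- `(T - b - B)(B - b) - bB = B(T - B) - b(T - b + B)`
theorem mul_sub_le_of_mul_le_sub_mul_sub {b B T : α} (h : b * B ≤ (T - b - B) * (B - b)) :
    b * (T - b + B) ≤ B * (T - B) := by
  linear_combination h

theorem ceil_div_mul_lt_add [FloorRing α] (x : α) {B : α} (hB : 0 < B) :
    ⌈x / B⌉ * B < x + B := by
  have := mul_lt_mul_of_pos_right (Int.ceil_lt_add_one (x / B)) hB
  rwa [add_mul, div_mul_cancel₀ x hB.ne', one_mul] at this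

theorem ceil_sub_div_mul_lt_sub [FloorRing α] {b B T : α} (hb : 0 < b) (hB : 0 < B)
    (h : b * (T - b + B) ≤ B * (T - B)) : ⌈(T - b) / B⌉ * b < T - B := by
  have hceil := mul_lt_mul_of_pos_left (ceil_div_mul_lt_add (T - b) hB) hb
  rw [← mul_lt_mul_iff_of_pos_left hB]
  linarith

-- The truncated difference `T - (b + B)` cannot be `0`, since `0 < b * B`.
theorem Nat.cast_mul_le_sub_sub_mul_sub {b B T : ℕ} (hb : 0 < b) (hbB : b ≤ B)
    (h : b * B ≤ (T - (b + B)) * (B - b)) : (b : α) * B ≤ (T - b - B) * (B - b) := by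
  have hT : b + B ≤ T := by
    by_contra! hlt
    rw [Nat.sub_eq_zero_of_le hlt.le, zero_mul] at h
    exact (Nat.mul_pos hb (hb.trans_le hbB)).not_ge h
  have hcast := (Nat.cast_le (α := α)).2 h
  push_cast [Nat.cast_sub hT, Nat.cast_sub hbB] at hcast
  linarith

end

theorem stmt15_general (b1 b2 T : ℕ) (hb1 : 0 < b1) (hb2 : 0 < b2)
    (h : (T - b1 - b2) * (max b1 b2 - min b1 b2) ≥ min b1 b2 * max b1 b2) :
    ((max b1 b2 : ℤ)) * (T - max b1 b2)
        ≥ (min b1 b2 : ℤ) * (max b1 b2) * ⌈((T : ℚ) - min b1 b2) / max b1 b2⌉ ∧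
      ((T : ℚ) - max b1 b2) / min b1 b2 ≥ (⌈((T : ℚ) - min b1 b2) / max b1 b2⌉ : ℤ) := by
  rw [← Nat.cast_max, ← Nat.cast_min]
  rw [Nat.sub_sub, ← min_add_max b1 b2] at h
  set b := min b1 b2
  set B := max b1 b2
  have hb : 0 < b := lt_min hb1 hb2
  have hB : 0 < B := hb.trans_le min_le_max
  have hbQ : (0 : ℚ) < b := by exact_mod_cast hb
  have hceil : (⌈((T : ℚ) - b) / B⌉ : ℚ) * b < T - B :=
    ceil_sub_div_mul_lt_sub hbQ (by exact_mod_cast hB) <|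
      mul_sub_le_of_mul_le_sub_mul_sub <| Nat.cast_mul_le_sub_sub_mul_sub hb min_le_max h
  refine ⟨?_, by rw [ge_iff_le, le_div_iff₀ hbQ]; exact hceil.le⟩
  have hceilZ : ⌈((T : ℚ) - b) / B⌉ * (b : ℤ) ≤ T - B := by exact_mod_cast hceil.le
  linarith [mul_le_mul_of_nonneg_left hceilZ (Int.natCast_nonneg B)]

/-- Quantitative version of Remark 1's sufficient condition: with
`B = max(b1,b2)`, `b = min(b1,b2)`, if `(T - b1 - b2)*(B - b) ≥ b*B`
then `B*(T - B) ≥ b*B*⌈(T-b)/B⌉`, i.e., `(T-B)/b ≥ ⌈(T-b)/B⌉`. -/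
theorem stmt15 (b1 b2 T : ℕ) (hb1 : 0 < b1) (hb2 : 0 < b2) (hne : b1 ≠ b2)
    (hT : b1 + b2 ≤ T)
    (h : (T - b1 - b2) * (max b1 b2 - min b1 b2) ≥ min b1 b2 * max b1 b2) :
    ((max b1 b2 : ℤ)) * (T - max b1 b2)
        ≥ (min b1 b2 : ℤ) * (max b1 b2) * ⌈((T : ℚ) - min b1 b2) / max b1 b2⌉ ∧
      ((T : ℚ) - max b1 b2) / min b1 b2 ≥ (⌈((T : ℚ) - min b1 b2) / max b1 b2⌉ : ℤ) :=
  stmt15_general b1 b2 T hb1 hb2 h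
end
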